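/- (Discrete energy dissipation, matrix form.) Let N ≥ 1, m ∈ ℝᴺ with positive entries and M = diag(m), let Q, U ∈ ℝᴺˣᴺ be symmetric with Q positive semidefinite, and let σ, γ, Δt > 0. Let I ⊆ ℝ be an open interval, ψ₊ : I → ℝ convex and differentiable, and ψ̄₋ : ℝ → ℝ concave and differentiable. Suppose the vectors n^k, n^{k+1} ∈ Iᴺ and φ^k, φ^{k+1} ∈ ℝᴺ satisfy: (i) M(n^{k+1} − n^k) = −Δt·Uξ, where ξ_i = φ^{k+1}_i + ψ₊'(n^{k+1}_i); (ii) σQφ^{k+1} + Mφ^{k+1} = γQn^{k+1} + M·ψ̄₋'(υ^k), where υ^ℓ := n^ℓ − (σ/γ)φ^ℓ and ψ̄₋' is applied componentwise. Define the discrete energy E(n,φ) := (γ/2)·(n − (σ/γ)φ)ᵀQ(n − (σ/γ)φ) + (σ/(2γ))·Σ_i m_i φ_i² + Σ_i m_i·[ψ₊(n_i) + ψ̄₋(n_i − (σ/γ)φ_i)]. Then E(n^{k+1}, φ^{k+1}) + Δt·ξᵀUξ ≤ E(n^k, φ^k). -/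

import Mathlib

/-!
Every part of the energy is estimated by its linearization at the time level the scheme uses
for it. The quadratic forms in `υ` and `φ` are convex, and `ψ₊` is convex, so their increments
are bounded by derivatives at the new level; `ψ̄₋` is concave, so its increment is bounded by its
derivative at the old level `υᵏ`. Substituting (ii) for `γQυᵏ⁺¹` and then (i) for
`M(nᵏ⁺¹ - nᵏ)` collapses this linearized increment to `-Δt ξᵀUξ`.
-/

/-- The discrete energy
`E(n,φ) = (γ/2)·(n−(σ/γ)φ)ᵀQ(n−(σ/γ)φ) + (σ/(2γ))·Σᵢ mᵢφᵢ² + Σᵢ mᵢ·[ψ₊(nᵢ) + ψ̄₋(nᵢ−(σ/γ)φᵢ)]`. -/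
noncomputable def discreteEnergy {N : ℕ} (m : Fin N → ℝ) (Q : Matrix (Fin N) (Fin N) ℝ)
    (σ γ : ℝ) (ψp ψm : ℝ → ℝ) (n φ : Fin N → ℝ) : ℝ :=
  γ / 2 * dotProduct (fun i => n i - σ / γ * φ i)
      (Q.mulVec fun i => n i - σ / γ * φ i)
    + σ / (2 * γ) * ∑ i, m i * φ i ^ 2
    + ∑ i, m i * (ψp (n i) + ψm (n i - σ / γ * φ i))

open Finset Matrix

theorem ConvexOn.add_deriv_mul_sub_le {S : Set ℝ} {f : ℝ → ℝ} (hf : ConvexOn ℝ S f) {x y : ℝ}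
    (hx : x ∈ S) (hy : y ∈ S) (hd : DifferentiableAt ℝ f x) :
    f x + deriv f x * (y - x) ≤ f y := by
  rcases lt_trichotomy x y with hxy | rfl | hxy
  · have h := hf.deriv_le_slope hx hy hxy hd
    rw [slope_def_field, le_div_iff₀ (sub_pos.2 hxy)] at h
    linarith
  · simp
  · have h := hf.slope_le_deriv hy hx hxy hd
    rw [slope_def_field, div_le_iff₀ (sub_pos.2 hxy)] at h
    linarith

theorem ConcaveOn.le_add_deriv_mul_sub {S : Set ℝ} {f : ℝ → ℝ} (hf : ConcaveOn ℝ S f) {x y : ℝ}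
    (hx : x ∈ S) (hy : y ∈ S) (hd : DifferentiableAt ℝ f x) :
    f y ≤ f x + deriv f x * (y - x) := by
  have h := hf.neg.add_deriv_mul_sub_le hx hy hd.neg
  rw [deriv.neg] at h
  simp only [Pi.neg_apply] at h
  linarith

theorem Matrix.IsSymm.dotProduct_mulVec_sub_dotProduct_mulVec {R ι : Type*} [CommRing R]
    [Fintype ι] {Q : Matrix ι ι R} (hQ : Q.IsSymm) (x y : ι → R) :
    x ⬝ᵥ Q *ᵥ x - y ⬝ᵥ Q *ᵥ y = 2 * ((x - y) ⬝ᵥ Q *ᵥ x) - (x - y) ⬝ᵥ Q *ᵥ (x - y) := by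
  have hcomm : y ⬝ᵥ Q *ᵥ x = x ⬝ᵥ Q *ᵥ y := by
    rw [dotProduct_mulVec, ← mulVec_transpose, hQ.eq, dotProduct_comm]
  simp only [mulVec_sub, sub_dotProduct, dotProduct_sub]
  rw [hcomm]
  ring

theorem Matrix.PosSemidef.dotProduct_mulVec_sub_le {ι : Type*} [Fintype ι]
    {Q : Matrix ι ι ℝ} (hQ : Q.PosSemidef) (x y : ι → ℝ) :
    x ⬝ᵥ Q *ᵥ x - y ⬝ᵥ Q *ᵥ y ≤ 2 * ((x - y) ⬝ᵥ Q *ᵥ x) := by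
  have hnonneg := hQ.dotProduct_mulVec_nonneg (x - y)
  rw [star_trivial] at hnonneg
  rw [(isHermitian_iff_isSymm.1 hQ.1).dotProduct_mulVec_sub_dotProduct_mulVec]
  linarith

noncomputable def upsilon {ι : Type*} (σ γ : ℝ) (n φ : ι → ℝ) : ι → ℝ := n - (σ / γ) • φ

theorem upsilon_apply {ι : Type*} (σ γ : ℝ) (n φ : ι → ℝ) (i : ι) :
    upsilon σ γ n φ i = n i - σ / γ * φ i := rfl

theorem discreteEnergy_eq {N : ℕ} (m : Fin N → ℝ) (Q : Matrix (Fin N) (Fin N) ℝ)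
    (σ γ : ℝ) (ψp ψm : ℝ → ℝ) (n φ : Fin N → ℝ) :
    discreteEnergy m Q σ γ ψp ψm n φ =
      γ / 2 * (upsilon σ γ n φ ⬝ᵥ Q *ᵥ upsilon σ γ n φ)
        + ∑ i, m i * (σ / γ / 2 * φ i ^ 2 + ψp (n i) + ψm (upsilon σ γ n φ i)) := by
  rw [discreteEnergy, add_assoc, mul_sum, ← sum_add_distrib]
  congr 1
  refine sum_congr rfl fun i _ => ?_
  rw [upsilon_apply]
  ring

theorem discreteEnergy_sub_le {N : ℕ} {m : Fin N → ℝ} {Q : Matrix (Fin N) (Fin N) ℝ}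
    {σ γ : ℝ} {ψp ψm : ℝ → ℝ} {n₀ n₁ φ₀ φ₁ : Fin N → ℝ} (hm : ∀ i, 0 ≤ m i) (hQ : Q.PosSemidef)
    (hγ : 0 ≤ γ) (hσγ : 0 ≤ σ / γ) {S : Set ℝ} (hψp : ConvexOn ℝ S ψp)
    (hψpdiff : ∀ x ∈ S, DifferentiableAt ℝ ψp x) (hψm : ConcaveOn ℝ Set.univ ψm)
    (hψmdiff : Differentiable ℝ ψm) (hn₀ : ∀ i, n₀ i ∈ S) (hn₁ : ∀ i, n₁ i ∈ S) :
    let υ₀ := upsilon σ γ n₀ φ₀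
    let υ₁ := upsilon σ γ n₁ φ₁
    discreteEnergy m Q σ γ ψp ψm n₁ φ₁ - discreteEnergy m Q σ γ ψp ψm n₀ φ₀ ≤
      γ * ((υ₁ - υ₀) ⬝ᵥ Q *ᵥ υ₁) + ∑ i, m i * (σ / γ * φ₁ i * (φ₁ i - φ₀ i)
        + deriv ψp (n₁ i) * (n₁ i - n₀ i) + deriv ψm (υ₀ i) * (υ₁ i - υ₀ i)) := by
  intro υ₀ υ₁
  have hquad := hQ.dotProduct_mulVec_sub_le υ₁ υ₀
  have hlocal : ∀ i, m i * (σ / γ / 2 * φ₁ i ^ 2 + ψp (n₁ i) + ψm (υ₁ i))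
      - m i * (σ / γ / 2 * φ₀ i ^ 2 + ψp (n₀ i) + ψm (υ₀ i)) ≤
      m i * (σ / γ * φ₁ i * (φ₁ i - φ₀ i)
        + deriv ψp (n₁ i) * (n₁ i - n₀ i) + deriv ψm (υ₀ i) * (υ₁ i - υ₀ i)) := by
    intro i
    have hp := hψp.add_deriv_mul_sub_le (hn₁ i) (hn₀ i) (hψpdiff _ (hn₁ i))
    have hc := hψm.le_add_deriv_mul_sub (Set.mem_univ (υ₀ i)) (Set.mem_univ (υ₁ i)) (hψmdiff _)
    have hsq : 0 ≤ σ / γ / 2 * (φ₁ i - φ₀ i) ^ 2 := by positivity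
    rw [← mul_sub]
    exact mul_le_mul_of_nonneg_left (by linarith) (hm i)
  have hsum := sum_le_sum fun i (_ : i ∈ univ) => hlocal i
  rw [sum_sub_distrib] at hsum
  have hquad' := mul_le_mul_of_nonneg_left hquad hγ
  rw [discreteEnergy_eq, discreteEnergy_eq]
  linarith

theorem linearizedIncrement_eq {ι : Type*} [Fintype ι] {m : ι → ℝ} {Q U : Matrix ι ι ℝ}
    {σ γ Δt : ℝ} (hγ : γ ≠ 0) {n₀ n₁ φ₀ φ₁ ξ p w : ι → ℝ} (hξ : ∀ i, ξ i = φ₁ i + p i)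
    (hstep : ∀ i, m i * (n₁ i - n₀ i) = -Δt * (U *ᵥ ξ) i)
    (hφ : ∀ i, σ * (Q *ᵥ φ₁) i + m i * φ₁ i = γ * (Q *ᵥ n₁) i + m i * w i) :
    let υ₀ := upsilon σ γ n₀ φ₀
    let υ₁ := upsilon σ γ n₁ φ₁
    γ * ((υ₁ - υ₀) ⬝ᵥ Q *ᵥ υ₁) + ∑ i, m i * (σ / γ * φ₁ i * (φ₁ i - φ₀ i)
        + p i * (n₁ i - n₀ i) + w i * (υ₁ i - υ₀ i)) = -Δt * (ξ ⬝ᵥ U *ᵥ ξ) := by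
  intro υ₀ υ₁
  have hQυ₁ : ∀ i, (γ • Q *ᵥ υ₁) i = m i * (φ₁ i - w i) := by
    intro i
    have hσ : γ * (σ / γ) = σ := mul_div_cancel₀ σ hγ
    simp only [υ₁, upsilon, mulVec_sub, mulVec_smul, Pi.smul_apply, Pi.sub_apply, smul_eq_mul]
    linear_combination -(Q *ᵥ φ₁) i * hσ - hφ i
  rw [← smul_eq_mul γ, ← dotProduct_smul, dotProduct, dotProduct, mul_sum, ← sum_add_distrib]
  refine sum_congr rfl fun i _ => ?_
  simp only [hQυ₁, Pi.sub_apply, υ₀, υ₁, upsilon_apply, hξ]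
  linear_combination (φ₁ i + p i) * hstep i

theorem stmt8_general (N : ℕ)
    (m : Fin N → ℝ) (hm : ∀ i, 0 < m i)
    (Q U : Matrix (Fin N) (Fin N) ℝ)
    (hQpsd : Q.PosSemidef)
    (σ γ Δt : ℝ) (hσ : 0 < σ) (hγ : 0 < γ)
    (a b : ℝ) (ψp ψm : ℝ → ℝ)
    (hψp : ConvexOn ℝ (Set.Ioo a b) ψp)
    (hψpdiff : ∀ x ∈ Set.Ioo a b, DifferentiableAt ℝ ψp x)
    (hψm : ConcaveOn ℝ Set.univ ψm)
    (hψmdiff : Differentiable ℝ ψm)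
    (nk nk1 : Fin N → ℝ) (hnk : ∀ i, nk i ∈ Set.Ioo a b) (hnk1 : ∀ i, nk1 i ∈ Set.Ioo a b)
    (φk φk1 ξ : Fin N → ℝ)
    (hξ : ∀ i, ξ i = φk1 i + deriv ψp (nk1 i))
    (hstep : ∀ i, m i * (nk1 i - nk i) = -Δt * (U.mulVec ξ) i)
    (hφeq : ∀ i, σ * (Q.mulVec φk1) i + m i * φk1 i =
      γ * (Q.mulVec nk1) i + m i * deriv ψm (nk i - σ / γ * φk i)) :
    discreteEnergy m Q σ γ ψp ψm nk1 φk1 + Δt * dotProduct ξ (U.mulVec ξ) ≤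
      discreteEnergy m Q σ γ ψp ψm nk φk := by
  have hdecrease := discreteEnergy_sub_le (φ₀ := φk) (φ₁ := φk1) (fun i => (hm i).le) hQpsd
    hγ.le (div_nonneg hσ.le hγ.le) hψp hψpdiff hψm hψmdiff hnk hnk1
  have hidentity := linearizedIncrement_eq (φ₀ := φk)
    (w := fun i => deriv ψm (upsilon σ γ nk φk i)) hγ.ne' hξ hstep hφeq
  dsimp only at hdecrease hidentity
  linarith

theorem stmt8 (N : ℕ) (hN : 1 ≤ N)
    (m : Fin N → ℝ) (hm : ∀ i, 0 < m i)
    (Q U : Matrix (Fin N) (Fin N) ℝ) (hQsym : Q.IsSymm) (hUsym : U.IsSymm)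
    (hQpsd : Q.PosSemidef)
    (σ γ Δt : ℝ) (hσ : 0 < σ) (hγ : 0 < γ) (hΔt : 0 < Δt)
    (a b : ℝ) (ψp ψm : ℝ → ℝ)
    (hψp : ConvexOn ℝ (Set.Ioo a b) ψp)
    (hψpdiff : ∀ x ∈ Set.Ioo a b, DifferentiableAt ℝ ψp x)
    (hψm : ConcaveOn ℝ Set.univ ψm)
    (hψmdiff : Differentiable ℝ ψm)
    (nk nk1 : Fin N → ℝ) (hnk : ∀ i, nk i ∈ Set.Ioo a b) (hnk1 : ∀ i, nk1 i ∈ Set.Ioo a b)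
    (φk φk1 ξ : Fin N → ℝ)
    (hξ : ∀ i, ξ i = φk1 i + deriv ψp (nk1 i))
    (hstep : ∀ i, m i * (nk1 i - nk i) = -Δt * (U.mulVec ξ) i)
    (hφeq : ∀ i, σ * (Q.mulVec φk1) i + m i * φk1 i =
      γ * (Q.mulVec nk1) i + m i * deriv ψm (nk i - σ / γ * φk i)) :
    discreteEnergy m Q σ γ ψp ψm nk1 φk1 + Δt * dotProduct ξ (U.mulVec ξ) ≤
      discreteEnergy m Q σ γ ψp ψm nk φk :=
  stmt8_general N m hm Q U hQpsd σ γ Δt hσ hγ a b ψp ψm hψp hψpdiff hψm hψmdiff nk nk1 hnk hnk1 φk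
    φk1 ξ hξ hstep hφeq
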